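/- Let a be a real number. For s ∈ (1,2) define t(s) = s³(2−s)/(2s−1) and τ̃(s) = s^{−6a²+1/12}·(s−1)^{−6a²+1/12}·(s+1)^{2a²}·(2−s)^{2a²}·(2s−1)^{5a²−1/16} (real powers of positive real bases). Define σ̃(s) = t(s)(t(s)−1)·(τ̃'(s)/τ̃(s))/t'(s). Then for every s ∈ (1,2) at which t'(s) ≠ 0, writing u = t(s), σ = σ̃(s), σ' = σ̃'(s)/t'(s), and σ'' = (d/ds)(σ̃'(s)/t'(s)) / t'(s), one has (u(u−1)σ'')² = −2·det of the 3×3 matrix with rows (2θ_0², uσ'−σ, σ'+θ_0²+θ_t²+θ_1²−θ_∞²), (uσ'−σ, 2θ_t², (u−1)σ'−σ), (σ'+θ_0²+θ_t²+θ_1²−θ_∞², (u−1)σ'−σ, 2θ_1²), with (θ_0,θ_t,θ_1,θ_∞) = (a, a, a, 1/4); i.e. the algebraic tau function τ̃(s) solves the σ-form of Painlevé VI along the parametrization t = t(s). -/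

import Mathlib

/-!
Since `τ̃` is a product of real powers of factors that are positive on `(1, 2)`, its logarithmic
derivative is a rational function of `s`. Hence `σ`, `dσ/dt` and `d²σ/dt²` are explicit rational
functions of `s`, and the σ-form of Painlevé VI becomes an identity between rational functions of
`s` and `a²`.
-/

open Set Filter Topology

theorem logDeriv_fun_rpow_const {f : ℝ → ℝ} {x : ℝ} (p : ℝ) (hf : DifferentiableAt ℝ f x)
    (hx : 0 < f x) : logDeriv (fun y => f y ^ p) x = p * logDeriv f x := by
  have := (Real.rpow_pos_of_pos hx p).ne'
  rw [logDeriv_apply, (hf.hasDerivAt.rpow_const (Or.inl hx.ne')).deriv, logDeriv_apply,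
    Real.rpow_sub_one hx.ne']
  field_simp

theorem eqOn_deriv_div_deriv {U : Set ℝ} (hU : IsOpen U) {f g F G F' H : ℝ → ℝ}
    (hf : EqOn f F U) (hg : EqOn g G U) (hF : ∀ x ∈ U, HasDerivAt F (F' x) x)
    (hG : ∀ x ∈ U, HasDerivAt G (F' x * H x) x) (hF' : ∀ x ∈ U, F' x ≠ 0) :
    EqOn (fun x => deriv g x / deriv f x) H U := by
  intro x hx
  have hnhds := hU.mem_nhds hx
  dsimp only
  rw [(hf.eventuallyEq_of_mem hnhds).deriv_eq, (hg.eventuallyEq_of_mem hnhds).deriv_eq,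
    (hF x hx).deriv, (hG x hx).deriv, mul_div_cancel_left₀ _ (hF' x hx)]

namespace PainleveVI

/-- `σ, σ', σ''` stand for the values at `t` of a function and of its first two derivatives. -/
def SigmaForm (θ₀ θₜ θ₁ θinf t σ σ' σ'' : ℝ) : Prop :=
  (t * (t - 1) * σ'') ^ 2 = -2 * Matrix.det
    !![2 * θ₀ ^ 2, t * σ' - σ, σ' + θ₀ ^ 2 + θₜ ^ 2 + θ₁ ^ 2 - θinf ^ 2;
      t * σ' - σ, 2 * θₜ ^ 2, (t - 1) * σ' - σ;
      σ' + θ₀ ^ 2 + θₜ ^ 2 + θ₁ ^ 2 - θinf ^ 2, (t - 1) * σ' - σ, 2 * θ₁ ^ 2]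

namespace SolutionIV

noncomputable def t (s : ℝ) : ℝ := s ^ 3 * (2 - s) / (2 * s - 1)

noncomputable def tDeriv (s : ℝ) : ℝ := -6 * s ^ 2 * (s - 1) ^ 2 / (2 * s - 1) ^ 2

noncomputable def tau (a s : ℝ) : ℝ :=
  s ^ (-6 * a ^ 2 + 1 / 12) * (s - 1) ^ (-6 * a ^ 2 + 1 / 12) *
    (s + 1) ^ (2 * a ^ 2) * (2 - s) ^ (2 * a ^ 2) * (2 * s - 1) ^ (5 * a ^ 2 - 1 / 16)

/-! `sigma`, `sigmaPrime` and `sigmaSecond` are `σ`, `dσ/dt` and `d²σ/dt²` as functions of the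
parameter `s`; the derivatives are taken with respect to `t`, not `s`. -/

noncomputable def sigma (a s : ℝ) : ℝ :=
  ((1 / 36 - 2 * a ^ 2) + (-1 / 18 + 4 * a ^ 2) * s + (1 / 48 - 3 * a ^ 2) * s ^ 2 +
    (5 / 72 - 2 * a ^ 2) * s ^ 3 + (-5 / 144 + a ^ 2) * s ^ 4) / (2 * s - 1)

noncomputable def sigmaPrime (a s : ℝ) : ℝ :=
  ((5 * s ^ 2 - 5 * s - 1) / 24 - 6 * a ^ 2 * (s ^ 2 - s - 1)) / (6 * s * (s - 1))

noncomputable def sigmaSecond (a s : ℝ) : ℝ :=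
  (6 * a ^ 2 - 1 / 24) * (2 * s - 1) ^ 3 / (36 * s ^ 4 * (s - 1) ^ 4)

theorem hasDerivAt_t {s : ℝ} (hs : 2 * s - 1 ≠ 0) : HasDerivAt t (tDeriv s) s := by
  have h := ((hasDerivAt_pow 3 s).mul ((hasDerivAt_id s).const_sub 2)).div
    (((hasDerivAt_id s).const_mul 2).sub_const 1) hs
  unfold t tDeriv
  refine h.congr_deriv ?_
  simp only [id, Pi.mul_apply]
  field_simp
  ring

theorem tDeriv_ne_zero {s : ℝ} (h0 : s ≠ 0) (h1 : s - 1 ≠ 0) (h2 : 2 * s - 1 ≠ 0) :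
    tDeriv s ≠ 0 := by
  unfold tDeriv
  positivity

theorem logDeriv_tau (a : ℝ) {s : ℝ} (hs : s ∈ Ioo 1 2) :
    logDeriv (tau a) s = (-6 * a ^ 2 + 1 / 12) * (1 / s + 1 / (s - 1)) +
      2 * a ^ 2 * (1 / (s + 1) - 1 / (2 - s)) + (5 * a ^ 2 - 1 / 16) * (2 / (2 * s - 1)) := by
  obtain ⟨h1, h2⟩ := hs
  have : 0 < s - 1 := by linarith
  have : 0 < 2 - s := by linarith
  have : 0 < 2 * s - 1 := by linarith
  unfold tau
  simp (disch := first | positivity | fun_prop (disch := positivity)) only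
    [logDeriv_mul, logDeriv_fun_rpow_const]
  simp only [logDeriv_apply, deriv_id'', deriv_sub_const_fun, deriv_fun_add, deriv_const_sub_id',
    deriv_const_mul_id', differentiableAt_fun_id, differentiableAt_const, deriv_const']
  ring

theorem sigma_eq_logDeriv_tau (a : ℝ) {s : ℝ} (hs : s ∈ Ioo 1 2) :
    sigma a s = t s * (t s - 1) * logDeriv (tau a) s / tDeriv s := by
  obtain ⟨h1, h2⟩ := hs
  have : s ≠ 0 := by positivity
  have : s - 1 ≠ 0 := by linarith
  have : s + 1 ≠ 0 := by linarith
  have : 2 - s ≠ 0 := by linarith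
  have : 2 * s - 1 ≠ 0 := by linarith
  have : s * 2 - 1 ≠ 0 := by linarith
  rw [logDeriv_tau a ⟨h1, h2⟩]
  unfold t tDeriv sigma
  field_simp
  ring

theorem hasDerivAt_sigma (a : ℝ) {s : ℝ} (hs : 2 * s - 1 ≠ 0) :
    HasDerivAt (sigma a) (tDeriv s * sigmaPrime a s) s := by
  have hnum := ((((hasDerivAt_const s (1 / 36 - 2 * a ^ 2)).add
      ((hasDerivAt_id s).const_mul (-1 / 18 + 4 * a ^ 2))).add
      ((hasDerivAt_pow 2 s).const_mul (1 / 48 - 3 * a ^ 2))).add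
      ((hasDerivAt_pow 3 s).const_mul (5 / 72 - 2 * a ^ 2))).add
      ((hasDerivAt_pow 4 s).const_mul (-5 / 144 + a ^ 2))
  have hden := ((hasDerivAt_id s).const_mul (2 : ℝ)).sub_const 1
  unfold sigma
  refine (hnum.div hden hs).congr_deriv ?_
  unfold tDeriv sigmaPrime
  simp only [id, Pi.add_apply]
  field_simp
  ring

theorem hasDerivAt_sigmaPrime (a : ℝ) {s : ℝ} (h0 : s ≠ 0) (h1 : s - 1 ≠ 0) :
    HasDerivAt (sigmaPrime a) (tDeriv s * sigmaSecond a s) s := by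
  have hquad := (((hasDerivAt_pow 2 s).const_mul 5).sub ((hasDerivAt_id s).const_mul 5)).sub_const 1
  have hnum := (hquad.div_const 24).sub
    ((((hasDerivAt_pow 2 s).sub (hasDerivAt_id s)).sub_const 1).const_mul (6 * a ^ 2))
  have hden := ((hasDerivAt_id s).const_mul 6).mul ((hasDerivAt_id s).sub_const 1)
  unfold sigmaPrime
  refine (hnum.div hden (by simp [h0, h1])).congr_deriv ?_
  unfold tDeriv sigmaSecond
  simp only [id, Pi.sub_apply, Pi.mul_apply]
  field_simp
  ring

theorem sigmaForm (a : ℝ) {s : ℝ} (h0 : s ≠ 0) (h1 : s - 1 ≠ 0) (h2 : 2 * s - 1 ≠ 0) :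
    SigmaForm a a a (1 / 4) (t s) (sigma a s) (sigmaPrime a s) (sigmaSecond a s) := by
  have : s * 2 - 1 ≠ 0 := by rwa [mul_comm]
  -- the factor `2 s - 1` cancels from every entry
  have e₀ : t s * (t s - 1) * sigmaSecond a s =
      ((-1 / 432 + a ^ 2 / 3) + (1 / 288 - a ^ 2 / 2) * s + (1 / 288 - a ^ 2 / 2) * s ^ 2 +
        (-1 / 432 + a ^ 2 / 3) * s ^ 3) / (s * (s - 1)) := by
    unfold t sigmaSecond
    field_simp
    ring
  have e₁ : t s * sigmaPrime a s - sigma a s =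
      ((-1 / 36 + 2 * a ^ 2) + (1 / 36 - 2 * a ^ 2) * s + (-1 / 144 + a ^ 2) * s ^ 2) /
        (s - 1) := by
    unfold t sigmaPrime sigma
    field_simp
    ring
  have e₂ : (t s - 1) * sigmaPrime a s - sigma a s =
      ((-1 / 144 + a ^ 2) + (-1 / 72) * s + (-1 / 144 + a ^ 2) * s ^ 2) / s := by
    unfold t sigmaPrime sigma
    field_simp
    ring
  have e₃ : sigmaPrime a s + a ^ 2 + a ^ 2 + a ^ 2 - (1 / 4 : ℝ) ^ 2 =
      ((-1 / 144 + a ^ 2) + (1 / 36 - 2 * a ^ 2) * s + (-1 / 36 + 2 * a ^ 2) * s ^ 2) /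
        (s * (s - 1)) := by
    unfold sigmaPrime
    field_simp
    ring
  rw [SigmaForm, e₀, e₁, e₂, e₃, Matrix.det_fin_three]
  simp only [Matrix.of_apply, Matrix.cons_val', Matrix.cons_val_zero, Matrix.cons_val_one,
    Matrix.head_cons, Matrix.empty_val', Matrix.cons_val_fin_one, Matrix.head_fin_const,
    Matrix.cons_val_two, Matrix.tail_cons]
  field_simp
  ring

end SolutionIV

end PainleveVI

open PainleveVI PainleveVI.SolutionIV

/-- the algebraic Painlevé VI solution IV with parameters
`θ = (a, a, a, 1/4)`: along the parametrization `t(s) = s³(2−s)/(2s−1)`, `s ∈ (1,2)`,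
the tau function `τ̃(s) = s^{−6a²+1/12}(s−1)^{−6a²+1/12}(s+1)^{2a²}(2−s)^{2a²}(2s−1)^{5a²−1/16}`
solves the σ-form of Painlevé VI, with derivatives in `t` computed by the chain rule
(division by `t'(s)`) at points where `t'(s) ≠ 0`. -/
theorem algebraic_solution_IV_sigma_form (a : ℝ)
    (tf τ : ℝ → ℝ)
    (htf : ∀ s ∈ Ioo (1 : ℝ) 2, tf s = s ^ 3 * (2 - s) / (2 * s - 1))
    (hτ : ∀ s ∈ Ioo (1 : ℝ) 2,
      τ s = s ^ (-6 * a ^ 2 + 1 / 12) * (s - 1) ^ (-6 * a ^ 2 + 1 / 12) *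
        (s + 1) ^ (2 * a ^ 2) * (2 - s) ^ (2 * a ^ 2) * (2 * s - 1) ^ (5 * a ^ 2 - 1 / 16))
    (σ : ℝ → ℝ)
    (hσ : ∀ s : ℝ, σ s = tf s * (tf s - 1) * (deriv τ s / τ s) / deriv tf s) :
    ∀ s ∈ Ioo (1 : ℝ) 2, deriv tf s ≠ 0 →
      (fun (u σv σ' σ'' : ℝ) =>
        (u * (u - 1) * σ'') ^ 2 =
          -2 * Matrix.det
            !![2 * a ^ 2, u * σ' - σv,
                σ' + a ^ 2 + a ^ 2 + a ^ 2 - (1 / 4 : ℝ) ^ 2;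
              u * σ' - σv, 2 * a ^ 2, (u - 1) * σ' - σv;
              σ' + a ^ 2 + a ^ 2 + a ^ 2 - (1 / 4 : ℝ) ^ 2,
                (u - 1) * σ' - σv, 2 * a ^ 2])
      (tf s) (σ s) (deriv σ s / deriv tf s)
      (deriv (fun x => deriv σ x / deriv tf x) s / deriv tf s) := by
  have h0 : ∀ x ∈ Ioo (1 : ℝ) 2, x ≠ 0 := fun x hx => by linarith [hx.1]
  have h1 : ∀ x ∈ Ioo (1 : ℝ) 2, x - 1 ≠ 0 := fun x hx => by linarith [hx.1]
  have h2 : ∀ x ∈ Ioo (1 : ℝ) 2, 2 * x - 1 ≠ 0 := fun x hx => by linarith [hx.1]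
  have htf : EqOn tf t (Ioo 1 2) := htf
  have ht : ∀ x ∈ Ioo (1 : ℝ) 2, HasDerivAt t (tDeriv x) x := fun x hx => hasDerivAt_t (h2 x hx)
  have ht_ne : ∀ x ∈ Ioo (1 : ℝ) 2, tDeriv x ≠ 0 := fun x hx =>
    tDeriv_ne_zero (h0 x hx) (h1 x hx) (h2 x hx)
  have hσ₀ : EqOn σ (sigma a) (Ioo 1 2) := by
    intro x hx
    have hnhds := isOpen_Ioo.mem_nhds hx
    have hτ : τ =ᶠ[𝓝 x] tau a := EqOn.eventuallyEq_of_mem hτ hnhds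
    rw [hσ, ← logDeriv_apply, (logDeriv_congr_nhds hτ).eq_of_nhds,
      (htf.eventuallyEq_of_mem hnhds).deriv_eq, (ht x hx).deriv, htf hx]
    exact (sigma_eq_logDeriv_tau a hx).symm
  have hσ₁ := eqOn_deriv_div_deriv isOpen_Ioo htf hσ₀ ht
    (fun x hx => hasDerivAt_sigma a (h2 x hx)) ht_ne
  have hσ₂ := eqOn_deriv_div_deriv isOpen_Ioo htf hσ₁ ht
    (fun x hx => hasDerivAt_sigmaPrime a (h0 x hx) (h1 x hx)) ht_ne
  intro s hs _
  have key := sigmaForm a (h0 s hs) (h1 s hs) (h2 s hs)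
  rw [← htf hs, ← hσ₀ hs, ← hσ₁ hs, ← hσ₂ hs] at key
  exact key
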